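/- arXiv:1112.1931 — 5 statements merged into one kernel-verified Lean document; each statement's English description precedes it below -/
import Mathlib

section
/- Let d ≥ 1 be an integer, let α ∈ (0,1), and let s > 1. There exists a constant C > 0 (depending only on s, α, d) such that for every λ ∈ ℝ, every nonzero h ∈ ℝ^d, and every σ > 0 satisfying σ² ≥ ‖h‖^{2α}, one has ∫_ℝ (‖h‖² + (λ + u)²)^{-s/2} dγ_{0,σ²}(u) ≤ C ‖h‖^{1 - s - α}, where γ_{0,σ²} denotes the centered Gaussian probability measure on ℝ with variance σ². -/
open MeasureTheory ProbabilityTheory Real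

/-!
Rescaling `u ↦ (λ + u) / ‖h‖` shows that the Lebesgue integral of
`(‖h‖² + (λ + u)²)^{-s/2}` equals `‖h‖^{1-s}` times the (finite, since `s > 1`) integral of
`(1 + v²)^{-s/2}`. The Gaussian density is at most `1 / (√(2π) σ) ≤ 1 / (√(2π) ‖h‖^α)`,
which costs the remaining factor `‖h‖^{-α}`.
-/

lemma gaussianPDFReal_le_inv_sqrt (μ : ℝ) (v : NNReal) (x : ℝ) :
    gaussianPDFReal μ v x ≤ (√(2 * π * v))⁻¹ := by
  have hexp : rexp (-(x - μ) ^ 2 / (2 * v)) ≤ 1 :=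
    exp_le_one_iff.mpr (div_nonpos_of_nonpos_of_nonneg (by nlinarith [sq_nonneg (x - μ)])
      (by positivity))
  simpa [gaussianPDFReal] using mul_le_mul_of_nonneg_left hexp (by positivity)

lemma integral_gaussianReal_le_of_nonneg {f : ℝ → ℝ} (hf₀ : 0 ≤ f) (hf : Integrable f)
    (μ : ℝ) {v : NNReal} (hv : v ≠ 0) :
    ∫ x, f x ∂gaussianReal μ v ≤ (√(2 * π * v))⁻¹ * ∫ x, f x := by
  rw [integral_gaussianReal_eq_integral_smul hv, ← integral_const_mul]
  have hpdf_norm : ∀ x, ‖gaussianPDFReal μ v x‖ ≤ (√(2 * π * v))⁻¹ := fun x => by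
    rw [norm_of_nonneg (gaussianPDFReal_nonneg μ v x)]
    exact gaussianPDFReal_le_inv_sqrt μ v x
  refine integral_mono ?_ (hf.const_mul _) fun x => ?_
  · exact hf.bdd_mul (measurable_gaussianPDFReal μ v).aestronglyMeasurable
      (Filter.Eventually.of_forall hpdf_norm)
  · exact mul_le_mul_of_nonneg_right (gaussianPDFReal_le_inv_sqrt μ v x) (hf₀ x)

lemma rpow_sq_add_sq_neg_eq {a : ℝ} (ha : 0 < a) (x s : ℝ) :
    (a ^ 2 + x ^ 2) ^ (-(s / 2)) = a ^ (-s) * (1 + (x / a) ^ 2) ^ (-(s / 2)) := by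
  have hfactor : a ^ 2 + x ^ 2 = a ^ 2 * (1 + (x / a) ^ 2) := by field_simp
  rw [hfactor, mul_rpow (by positivity) (by positivity), ← rpow_natCast, ← rpow_mul ha.le]
  norm_num [mul_div_cancel₀]

lemma integrable_one_add_sq_rpow_neg {s : ℝ} (hs : 1 < s) :
    Integrable fun v : ℝ => (1 + v ^ 2) ^ (-(s / 2)) := by
  simpa [norm_eq_abs, sq_abs, neg_div] using
    integrable_rpow_neg_one_add_norm_sq (E := ℝ) (μ := volume) (r := s) (by simpa using hs)

lemma integral_one_add_sq_rpow_neg_pos {s : ℝ} (hs : 1 < s) :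
    0 < ∫ v : ℝ, (1 + v ^ 2) ^ (-(s / 2)) := by
  rw [integral_pos_iff_support_of_nonneg (fun v => by positivity)
    (integrable_one_add_sq_rpow_neg hs)]
  have hsupp : Function.support (fun v : ℝ => (1 + v ^ 2) ^ (-(s / 2))) = Set.univ :=
    Set.eq_univ_of_forall fun v => (rpow_pos_of_pos (by positivity) _).ne'
  simp [hsupp]

lemma integrable_rpow_sq_add_sq_neg {a : ℝ} (ha : 0 < a) (c : ℝ) {s : ℝ} (hs : 1 < s) :
    Integrable fun u : ℝ => (a ^ 2 + (c + u) ^ 2) ^ (-(s / 2)) := by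
  have hscaled : Integrable fun u : ℝ => (1 + ((c + u) / a) ^ 2) ^ (-(s / 2)) := by
    simpa using ((integrable_one_add_sq_rpow_neg hs).comp_div ha.ne').comp_add_left c
  simpa only [rpow_sq_add_sq_neg_eq ha] using hscaled.const_mul (a ^ (-s))

lemma integral_rpow_sq_add_sq_neg {a : ℝ} (ha : 0 < a) (c s : ℝ) :
    ∫ u : ℝ, (a ^ 2 + (c + u) ^ 2) ^ (-(s / 2))
      = a ^ (1 - s) * ∫ v : ℝ, (1 + v ^ 2) ^ (-(s / 2)) := by
  simp only [rpow_sq_add_sq_neg_eq ha]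
  rw [integral_const_mul,
    integral_add_left_eq_self (fun u : ℝ => (1 + (u / a) ^ 2) ^ (-(s / 2))) c,
    Measure.integral_comp_div (fun v : ℝ => (1 + v ^ 2) ^ (-(s / 2))) a,
    abs_of_pos ha, smul_eq_mul, ← mul_assoc, ← rpow_add_one ha.ne']
  ring_nf

theorem stmt0_general (d : ℕ) (α : ℝ) (s : ℝ) (hs : 1 < s) :
    ∃ C > (0 : ℝ), ∀ (lam : ℝ) (h : EuclideanSpace ℝ (Fin d)) (σ : ℝ),
      h ≠ 0 → 0 < σ → ‖h‖ ^ (2 * α) ≤ σ ^ 2 →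
      ∫ u, (‖h‖ ^ 2 + (lam + u) ^ 2) ^ (-(s / 2)) ∂(gaussianReal 0 (σ ^ 2).toNNReal)
        ≤ C * ‖h‖ ^ (1 - s - α) := by
  set I := ∫ v : ℝ, (1 + v ^ 2) ^ (-(s / 2))
  have hI : 0 < I := integral_one_add_sq_rpow_neg_pos hs
  refine ⟨I / √(2 * π), by positivity, fun lam h σ hh hσ hvar => ?_⟩
  have ha : 0 < ‖h‖ := norm_pos_iff.mpr hh
  have hσa : ‖h‖ ^ α ≤ σ := by
    refine (pow_le_pow_iff_left₀ (by positivity) hσ.le two_ne_zero).mp ?_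
    rwa [← rpow_natCast, ← rpow_mul ha.le, mul_comm]
  have hvar_ne : (σ ^ 2).toNNReal ≠ 0 := by simpa using hσ.ne'
  have hsqrt : √(2 * π * (σ ^ 2).toNNReal) = √(2 * π) * σ := by
    rw [Real.coe_toNNReal _ (by positivity), sqrt_mul (by positivity), sqrt_sq hσ.le]
  calc ∫ u, (‖h‖ ^ 2 + (lam + u) ^ 2) ^ (-(s / 2)) ∂(gaussianReal 0 (σ ^ 2).toNNReal)
      ≤ (√(2 * π) * σ)⁻¹ * (‖h‖ ^ (1 - s) * I) := by
        rw [← hsqrt, ← integral_rpow_sq_add_sq_neg ha]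
        exact integral_gaussianReal_le_of_nonneg (fun u => by positivity)
          (integrable_rpow_sq_add_sq_neg ha lam hs) 0 hvar_ne
    _ ≤ (√(2 * π) * ‖h‖ ^ α)⁻¹ * (‖h‖ ^ (1 - s) * I) := by gcongr
    _ = I / √(2 * π) * ‖h‖ ^ (1 - s - α) := by
        rw [rpow_sub ha (1 - s) α]
        field_simp

/-- Case `s > 1` of the key Gaussian expectation estimate: if `σ² ≥ ‖h‖^{2α}`, then
`∫ (‖h‖² + (λ+u)²)^{-s/2} dγ_{0,σ²}(u) ≤ C ‖h‖^{1-s-α}`. -/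
theorem stmt0 (d : ℕ) (hd : 1 ≤ d) (α : ℝ) (hα : α ∈ Set.Ioo (0 : ℝ) 1) (s : ℝ) (hs : 1 < s) :
    ∃ C > (0 : ℝ), ∀ (lam : ℝ) (h : EuclideanSpace ℝ (Fin d)) (σ : ℝ),
      h ≠ 0 → 0 < σ → ‖h‖ ^ (2 * α) ≤ σ ^ 2 →
      ∫ u, (‖h‖ ^ 2 + (lam + u) ^ 2) ^ (-(s / 2)) ∂(gaussianReal 0 (σ ^ 2).toNNReal)
        ≤ C * ‖h‖ ^ (1 - s - α) :=
  stmt0_general d α s hs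
end

section
/- Let d ≥ 1 be an integer, let α ∈ (0,1), and let 0 < s < 1. There exists a constant C > 0 (depending only on s) such that for every λ ∈ ℝ, every nonzero h ∈ ℝ^d, and every σ > 0 satisfying σ² ≥ ‖h‖^{2α}, one has ∫_ℝ (‖h‖² + (λ + u)²)^{-s/2} dγ_{0,σ²}(u) ≤ C ‖h‖^{-α s}, where γ_{0,σ²} denotes the centered Gaussian probability measure on ℝ with variance σ². -/
/-!
Since `(‖h‖² + x²)^{-s/2} ≤ |x|^{-s}`, it suffices to bound the Gaussian expectation of
`|x|^{-s}`, with `x` now centred at `λ`. Split at `|x| = σ`: outside, `|x|^{-s} ≤ σ^{-s}`;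
inside, the Gaussian density is at most `1/(σ√(2π))` and `∫_{-σ}^{σ} |x|^{-s} dx = 2σ^{1-s}/(1-s)`,
which is integrable because `s < 1`. Both pieces are multiples of `σ^{-s}`, and
`σ ≥ ‖h‖^α` turns `σ^{-s}` into `‖h‖^{-αs}`.
-/

open MeasureTheory ProbabilityTheory Real Set Metric
open scoped ENNReal NNReal

lemma sq_rpow_neg_half {x : ℝ} (hx : 0 ≤ x) (s : ℝ) : (x ^ 2) ^ (-(s / 2)) = x ^ (-s) := by
  rw [← rpow_natCast, ← rpow_mul hx]
  ring_nf

lemma rpow_neg_half_le_rpow_neg {x r s : ℝ} (hr : 0 < r) (hrx : r ^ 2 ≤ x) (hs : 0 ≤ s) :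
    x ^ (-(s / 2)) ≤ r ^ (-s) :=
  sq_rpow_neg_half hr.le s ▸ rpow_le_rpow_of_nonpos (by positivity) hrx (by linarith)

lemma intervalIntegrable_abs_rpow {r : ℝ} (hr : -1 < r) (a b : ℝ) :
    IntervalIntegrable (fun x => |x| ^ r) volume a b := by
  have from_zero : ∀ c, 0 ≤ c → IntervalIntegrable (fun x => |x| ^ r) volume 0 c := by
    intro c hc
    refine (intervalIntegral.intervalIntegrable_rpow' hr).congr fun x hx => ?_
    rw [uIoc_of_le hc] at hx
    simp only [abs_of_pos hx.1]
  have from_zero' : ∀ c, IntervalIntegrable (fun x => |x| ^ r) volume 0 c := by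
    intro c
    rcases le_total 0 c with hc | hc
    · exact from_zero c hc
    · rw [IntervalIntegrable.iff_comp_neg]
      simpa using from_zero (-c) (by linarith)
  exact (from_zero' a).symm.trans (from_zero' b)

lemma integral_abs_rpow_symm {r σ : ℝ} (hr : -1 < r) (hσ : 0 ≤ σ) :
    ∫ x in (-σ)..σ, |x| ^ r = 2 * (σ ^ (r + 1) / (r + 1)) := by
  have half : ∫ x in (0 : ℝ)..σ, |x| ^ r = σ ^ (r + 1) / (r + 1) := by
    rw [intervalIntegral.integral_congr (g := fun x => x ^ r), integral_rpow (Or.inl hr),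
      zero_rpow (by linarith), sub_zero]
    intro x hx
    rw [uIcc_of_le hσ] at hx
    simp only [abs_of_nonneg hx.1]
  have reflect : ∫ x in (-σ)..0, |x| ^ r = ∫ x in (0 : ℝ)..σ, |x| ^ r := by
    simpa using (intervalIntegral.integral_comp_neg (a := 0) (b := σ) (fun x => |x| ^ r)).symm
  rw [← intervalIntegral.integral_add_adjacent_intervals (intervalIntegrable_abs_rpow hr _ _)
    (intervalIntegrable_abs_rpow hr _ _), reflect, half]
  ring

lemma integrableOn_abs_rpow_closedBall {r σ : ℝ} (hr : -1 < r) (hσ : 0 ≤ σ) :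
    IntegrableOn (fun x => |x| ^ r) (closedBall (0 : ℝ) σ) := by
  rw [closedBall_eq_Icc, zero_sub, zero_add,
    ← intervalIntegrable_iff_integrableOn_Icc_of_le (by linarith)]
  exact intervalIntegrable_abs_rpow hr _ _

lemma integral_abs_rpow_closedBall {r σ : ℝ} (hr : -1 < r) (hσ : 0 ≤ σ) :
    ∫ x in closedBall (0 : ℝ) σ, |x| ^ r = 2 * (σ ^ (r + 1) / (r + 1)) := by
  rw [closedBall_eq_Icc, zero_sub, zero_add, integral_Icc_eq_integral_Ioc,
    ← intervalIntegral.integral_of_le (by linarith), integral_abs_rpow_symm hr hσ]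

section DominatedByLebesgue

variable {μ : Measure ℝ} {c : ℝ≥0∞} {r : ℝ}

lemma integrableOn_abs_rpow_closedBall_of_le_smul_volume (hc : c ≠ ∞) (hμ : μ ≤ c • volume)
    (hr : -1 < r) {σ : ℝ} (hσ : 0 ≤ σ) :
    IntegrableOn (fun x => |x| ^ r) (closedBall (0 : ℝ) σ) μ :=
  (Measure.restrict_smul c (volume : Measure ℝ) _ ▸
    (integrableOn_abs_rpow_closedBall hr hσ).smul_measure hc).mono_measure
      (Measure.restrict_mono subset_rfl hμ)

lemma integrable_abs_rpow_of_le_smul_volume [IsFiniteMeasure μ] (hc : c ≠ ∞)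
    (hμ : μ ≤ c • volume) (hr1 : -1 < r) (hr0 : r ≤ 0) :
    Integrable (fun x => |x| ^ r) μ := by
  have near_zero := integrableOn_abs_rpow_closedBall_of_le_smul_volume hc hμ hr1 zero_le_one
  have away : IntegrableOn (fun x => |x| ^ r) (closedBall (0 : ℝ) 1)ᶜ μ := by
    refine Measure.integrableOn_of_bounded (M := 1) (measure_ne_top _ _)
      (continuous_abs.measurable.pow_const r).aestronglyMeasurable ?_
    filter_upwards [ae_restrict_mem measurableSet_closedBall.compl] with x hx
    have hx1 : 1 < |x| := by simpa using hx
    rw [norm_of_nonneg (by positivity)]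
    exact rpow_le_one_of_one_le_of_nonpos hx1.le hr0
  simpa using near_zero.union away

lemma integral_abs_rpow_le_of_le_smul_volume [IsProbabilityMeasure μ] (hc : c ≠ ∞)
    (hμ : μ ≤ c • volume) (hr1 : -1 < r) (hr0 : r ≤ 0) {σ : ℝ} (hσ : 0 < σ) :
    ∫ x, |x| ^ r ∂μ ≤ σ ^ r + c.toReal * (2 * (σ ^ (r + 1) / (r + 1))) := by
  have hint := integrable_abs_rpow_of_le_smul_volume hc hμ hr1 hr0
  rw [← integral_add_compl measurableSet_closedBall hint]
  have inside :
      ∫ x in closedBall (0 : ℝ) σ, |x| ^ r ∂μ ≤ c.toReal * (2 * (σ ^ (r + 1) / (r + 1))) :=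
    calc ∫ x in closedBall (0 : ℝ) σ, |x| ^ r ∂μ
        ≤ ∫ x in closedBall (0 : ℝ) σ, |x| ^ r ∂(c • volume) :=
          integral_mono_measure (Measure.restrict_mono subset_rfl hμ)
            (ae_of_all _ fun x => by positivity)
            (Measure.restrict_smul c (volume : Measure ℝ) _ ▸
              (integrableOn_abs_rpow_closedBall hr1 hσ.le).smul_measure hc)
      _ = c.toReal * (2 * (σ ^ (r + 1) / (r + 1))) := by
          rw [Measure.restrict_smul, integral_smul_measure, smul_eq_mul,
            integral_abs_rpow_closedBall hr1 hσ.le]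
  have outside : ∫ x in (closedBall (0 : ℝ) σ)ᶜ, |x| ^ r ∂μ ≤ σ ^ r :=
    calc ∫ x in (closedBall (0 : ℝ) σ)ᶜ, |x| ^ r ∂μ
        ≤ ∫ x in (closedBall (0 : ℝ) σ)ᶜ, σ ^ r ∂μ :=
          setIntegral_mono_on hint.integrableOn (integrableOn_const (measure_ne_top _ _))
            measurableSet_closedBall.compl fun x hx =>
              rpow_le_rpow_of_nonpos hσ (le_of_lt (by simpa using hx)) hr0
      _ = μ.real (closedBall (0 : ℝ) σ)ᶜ * σ ^ r := by rw [setIntegral_const, smul_eq_mul]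
      _ ≤ σ ^ r := mul_le_of_le_one_left (by positivity) measureReal_le_one
  exact (add_le_add inside outside).trans_eq (add_comm _ _)

end DominatedByLebesgue

lemma gaussianReal_le_smul_volume (m : ℝ) {v : ℝ≥0} (hv : v ≠ 0) :
    gaussianReal m v ≤ ENNReal.ofReal (√(2 * π * v))⁻¹ • volume := by
  rw [gaussianReal_of_var_ne_zero m hv, ← withDensity_const]
  refine withDensity_mono (ae_of_all _ fun x => ENNReal.ofReal_le_ofReal ?_)
  refine mul_le_of_le_one_right (by positivity) (exp_le_one_iff.2 ?_)
  exact div_nonpos_of_nonpos_of_nonneg (by simpa using sq_nonneg (x - m)) (by positivity)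

lemma integrable_abs_rpow_gaussianReal (m : ℝ) {v : ℝ≥0} (hv : v ≠ 0) {r : ℝ} (hr1 : -1 < r)
    (hr0 : r ≤ 0) : Integrable (fun x => |x| ^ r) (gaussianReal m v) :=
  integrable_abs_rpow_of_le_smul_volume ENNReal.ofReal_ne_top (gaussianReal_le_smul_volume m hv)
    hr1 hr0

lemma integral_abs_rpow_neg_gaussianReal_le (m : ℝ) {σ s : ℝ} (hσ : 0 < σ) (hs0 : 0 ≤ s)
    (hs1 : s < 1) :
    ∫ x, |x| ^ (-s) ∂gaussianReal m (σ ^ 2).toNNReal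
      ≤ (1 + 2 / ((1 - s) * √(2 * π))) * σ ^ (-s) := by
  have hv : (σ ^ 2).toNNReal ≠ 0 := by simpa using hσ.ne'
  have hsqrt : √(2 * π * (σ ^ 2).toNNReal) = σ * √(2 * π) := by
    rw [Real.coe_toNNReal _ (by positivity), mul_comm, sqrt_mul (by positivity), sqrt_sq hσ.le]
  have hdensity := gaussianReal_le_smul_volume m hv
  rw [hsqrt] at hdensity
  refine (integral_abs_rpow_le_of_le_smul_volume ENNReal.ofReal_ne_top hdensity (by linarith)
    (by linarith) hσ).trans_eq ?_
  rw [ENNReal.toReal_ofReal (by positivity), rpow_add hσ, rpow_one]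
  field_simp
  ring

theorem stmt1_general (d : ℕ) (α : ℝ) (s : ℝ)
    (hs : s ∈ Set.Ioo (0 : ℝ) 1) :
    ∃ C > (0 : ℝ), ∀ (lam : ℝ) (h : EuclideanSpace ℝ (Fin d)) (σ : ℝ),
      h ≠ 0 → 0 < σ → ‖h‖ ^ (2 * α) ≤ σ ^ 2 →
      ∫ u, (‖h‖ ^ 2 + (lam + u) ^ 2) ^ (-(s / 2)) ∂(gaussianReal 0 (σ ^ 2).toNNReal)
        ≤ C * ‖h‖ ^ (-(α * s)) := by
  obtain ⟨hs0, hs1⟩ := hs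
  refine ⟨1 + 2 / ((1 - s) * √(2 * π)), by have := sub_pos.2 hs1; positivity, ?_⟩
  intro lam h σ hh hσ hσh
  have ha : 0 < ‖h‖ := norm_pos_iff.2 hh
  have hv : (σ ^ 2).toNNReal ≠ 0 := by simpa using hσ.ne'
  have := nullSingletonClass_gaussianReal (μ := 0 + lam) hv
  have hmono : σ ^ (-s) ≤ ‖h‖ ^ (-(α * s)) :=
    calc σ ^ (-s) = (σ ^ 2) ^ (-(s / 2)) := (sq_rpow_neg_half hσ.le s).symm
      _ ≤ (‖h‖ ^ (2 * α)) ^ (-(s / 2)) := rpow_le_rpow_of_nonpos (by positivity) hσh (by linarith)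
      _ = ‖h‖ ^ (-(α * s)) := by rw [← rpow_mul ha.le]; ring_nf
  calc ∫ u, (‖h‖ ^ 2 + (lam + u) ^ 2) ^ (-(s / 2)) ∂(gaussianReal 0 (σ ^ 2).toNNReal)
      = ∫ x, (‖h‖ ^ 2 + x ^ 2) ^ (-(s / 2)) ∂(gaussianReal (0 + lam) (σ ^ 2).toNNReal) := by
        have hmeas : Measurable fun x : ℝ => (‖h‖ ^ 2 + x ^ 2) ^ (-(s / 2)) := by fun_prop
        rw [← gaussianReal_map_const_add, integral_map (by fun_prop) hmeas.aestronglyMeasurable]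
    _ ≤ ∫ x, |x| ^ (-s) ∂(gaussianReal (0 + lam) (σ ^ 2).toNNReal) := by
        refine integral_mono_of_nonneg (ae_of_all _ fun x => by positivity)
          (integrable_abs_rpow_gaussianReal _ hv (by linarith) (by linarith)) ?_
        filter_upwards [Measure.ae_ne _ 0] with x hx
        exact rpow_neg_half_le_rpow_neg (abs_pos.2 hx) (by rw [sq_abs]; linarith [sq_nonneg ‖h‖])
          hs0.le
    _ ≤ (1 + 2 / ((1 - s) * √(2 * π))) * σ ^ (-s) :=
        integral_abs_rpow_neg_gaussianReal_le _ hσ hs0.le hs1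
    _ ≤ (1 + 2 / ((1 - s) * √(2 * π))) * ‖h‖ ^ (-(α * s)) := by gcongr

/-- Case `0 < s < 1` of the key Gaussian expectation estimate: if `σ² ≥ ‖h‖^{2α}`, then
`∫ (‖h‖² + (λ+u)²)^{-s/2} dγ_{0,σ²}(u) ≤ C ‖h‖^{-αs}`. -/
theorem stmt1 (d : ℕ) (hd : 1 ≤ d) (α : ℝ) (hα : α ∈ Set.Ioo (0 : ℝ) 1) (s : ℝ)
    (hs : s ∈ Set.Ioo (0 : ℝ) 1) :
    ∃ C > (0 : ℝ), ∀ (lam : ℝ) (h : EuclideanSpace ℝ (Fin d)) (σ : ℝ),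
      h ≠ 0 → 0 < σ → ‖h‖ ^ (2 * α) ≤ σ ^ 2 →
      ∫ u, (‖h‖ ^ 2 + (lam + u) ^ 2) ^ (-(s / 2)) ∂(gaussianReal 0 (σ ^ 2).toNNReal)
        ≤ C * ‖h‖ ^ (-(α * s)) :=
  stmt1_general d α s hs
end

section
/- Let d ≥ 1, let α ∈ (0,1), and let K ⊆ ℝ^d be a compact set, and let f : K → ℝ be α-Hölder continuous with constant C ≥ 0, i.e. |f(x) − f(y)| ≤ C ‖x − y‖^α for all x, y ∈ K. Then dim_H(Γ_f^K) ≤ min(dim_H(K)/α, dim_H(K) + 1 − α), where Γ_f^K = {(x, f(x)) : x ∈ K} ⊆ ℝ^d × ℝ. -/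
/-!
On balls of radius `1` the identity is Lipschitz, hence `α`-Hölder, so the graph map
`x ↦ (x, f x)` is locally `α`-Hölder, which gives the bound `dim_H K / α`.
For the other bound, cover `K` by sets `U` of diameter `δ ≤ 1` with `∑ δ ^ s` small. Over `U` the
graph has height at most `C δ ^ α`, so it is covered by `⌊C δ ^ (α - 1)⌋ + 1` boxes of diameter `δ`,
contributing at most `(C + 1) δ ^ s` to the `(s + 1 - α)`-dimensional Hausdorff sum. Hence
`μH[s] K = 0` forces `μH[s + 1 - α]` of the graph to vanish.
-/

open MeasureTheory Set Filter Metric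
open scoped ENNReal NNReal

lemma Metric.ediam_prod_le {X Y : Type*} [PseudoEMetricSpace X] [PseudoEMetricSpace Y]
    (s : Set X) (t : Set Y) : ediam (s ×ˢ t) ≤ max (ediam s) (ediam t) :=
  ediam_le fun _ hp _ hq => by
    rw [Prod.edist_eq]
    exact max_le_max (edist_le_ediam_of_mem hp.1 hq.1) (edist_le_ediam_of_mem hp.2 hq.2)

lemma Real.exists_subset_Icc_of_ediam_le {S : Set ℝ} {L : ℝ} (hL : 0 ≤ L)
    (h : ediam S ≤ ENNReal.ofReal L) : ∃ a, S ⊆ Icc a (a + L) := by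
  have hS : Bornology.IsBounded S :=
    isBounded_iff_ediam_ne_top.2 (ne_top_of_le_ne_top ENNReal.ofReal_ne_top h)
  have hdiam : diam S ≤ L := ENNReal.toReal_le_of_le_ofReal hL h
  refine ⟨sInf S, hS.subset_Icc_sInf_sSup.trans (Icc_subset_Icc_right ?_)⟩
  linarith [Real.diam_eq hS]

lemma Icc_subset_iUnion_Icc_mul {a m δ : ℝ} (hδ : 0 ≤ δ) :
    Icc a (a + m * δ) ⊆ ⋃ k : Fin (⌊m⌋₊ + 1), Icc (a + k * δ) (a + (k + 1) * δ) := by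
  rintro y ⟨hay, hya⟩
  rcases hδ.eq_or_lt with rfl | hδ
  · simp only [mul_zero, add_zero] at hya
    exact mem_iUnion.2 ⟨0, by simpa using le_antisymm hya hay⟩
  set k := ⌊(y - a) / δ⌋₊
  have hk : k < ⌊m⌋₊ + 1 :=
    Nat.lt_succ_of_le (Nat.floor_mono ((div_le_iff₀ hδ).2 (by linarith)))
  have hk_le : k * δ ≤ y - a :=
    (le_div_iff₀ hδ).1 (Nat.floor_le (div_nonneg (sub_nonneg.2 hay) hδ.le))
  have hk_lt : y - a < (k + 1) * δ := (div_lt_iff₀ hδ).1 (Nat.lt_floor_add_one _)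
  exact mem_iUnion.2 ⟨⟨k, hk⟩, by simp only [mem_Icc]; constructor <;> linarith⟩

lemma natFloor_add_one_mul_rpow_le {c δ s t : ℝ} (hc : 0 ≤ c) (hδ0 : 0 ≤ δ) (hδ1 : δ ≤ 1)
    (hst : s ≤ t) (ht : 0 < t) :
    ((⌊c * δ ^ (s - t)⌋₊ + 1 : ℕ) : ℝ) * δ ^ t ≤ (c + 1) * δ ^ s := by
  rcases hδ0.eq_or_lt with rfl | hδ
  · rw [Real.zero_rpow ht.ne', mul_zero]
    positivity
  have hfloor : (⌊c * δ ^ (s - t)⌋₊ : ℝ) ≤ c * δ ^ (s - t) := Nat.floor_le (by positivity)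
  have hpow : δ ^ (s - t) * δ ^ t = δ ^ s := by rw [← Real.rpow_add hδ, sub_add_cancel]
  have hmono : δ ^ t ≤ δ ^ s := Real.rpow_le_rpow_of_exponent_ge hδ hδ1 hst
  push_cast
  nlinarith [Real.rpow_nonneg hδ0 t]

lemma HolderOnWith.of_dist_le {X Y : Type*} [PseudoMetricSpace X] [PseudoMetricSpace Y]
    {C r : ℝ≥0} {f : X → Y} {s : Set X}
    (h : ∀ x ∈ s, ∀ y ∈ s, dist (f x) (f y) ≤ C * dist x y ^ (r : ℝ)) :
    HolderOnWith C r f s := by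
  intro x hx y hy
  rw [edist_dist, edist_dist, ENNReal.ofReal_rpow_of_nonneg dist_nonneg r.coe_nonneg,
    ← ENNReal.ofReal_coe_nnreal, ← ENNReal.ofReal_mul C.coe_nonneg]
  exact ENNReal.ofReal_le_ofReal (h x hx y hy)

lemma HolderOnWith.prodMk {X Y Z : Type*} [PseudoEMetricSpace X] [PseudoEMetricSpace Y]
    [PseudoEMetricSpace Z] {C D r : ℝ≥0} {f : X → Y} {g : X → Z} {s : Set X}
    (hf : HolderOnWith C r f s) (hg : HolderOnWith D r g s) :
    HolderOnWith (max C D) r (fun x => (f x, g x)) s := fun x hx y hy =>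
  max_le ((hf.mono_const (le_max_left C D)) x hx y hy)
    ((hg.mono_const (le_max_right C D)) x hx y hy)

theorem HolderOnWith.dimH_graph_le_div {X Y : Type*} [EMetricSpace X] [EMetricSpace Y]
    [SecondCountableTopology X] {C r : ℝ≥0} {f : X → Y} {s : Set X}
    (hf : HolderOnWith C r f s) (hr0 : 0 < r) (hr1 : r ≤ 1) :
    dimH ((fun x => (x, f x)) '' s) ≤ dimH s / r := by
  refine dimH_image_le_of_locally_holder_on hr0 fun x _ => ?_
  have hid : HolderOnWith (1 * 2 ^ ((1 : ℝ≥0) - r : ℝ)) r id (s ∩ eball x 1) :=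
    (holderOnWith_one.2 LipschitzWith.id.lipschitzOnWith).of_le
      (fun y hy z hz => by simpa using edist_le_of_ediam_le hy.2 hz.2 ediam_eball_le) hr1
  exact ⟨_, s ∩ eball x 1, inter_mem_nhdsWithin s (eball_mem_nhds x one_pos),
    hid.prodMk (hf.mono inter_subset_left)⟩

lemma exists_cover_tsum_ediam_rpow_lt_of_hausdorffMeasure_lt {X : Type*} [EMetricSpace X]
    [MeasurableSpace X] [BorelSpace X] {s : Set X} {d : ℝ} (hd : 0 < d) {c r : ℝ≥0∞}
    (hc : μH[d] s < c) (hr : 0 < r) :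
    ∃ U : ℕ → Set X, s ⊆ ⋃ n, U n ∧ (∀ n, ediam (U n) ≤ r) ∧ ∑' n, ediam (U n) ^ d < c := by
  rw [Measure.hausdorffMeasure_apply] at hc
  obtain ⟨U, hsU, hUr, hsum⟩ := by simpa only [iInf_lt_iff] using (le_iSup₂ r hr).trans_lt hc
  refine ⟨U, hsU, hUr, lt_of_le_of_lt (ENNReal.tsum_le_tsum fun n => ?_) hsum⟩
  rcases (U n).eq_empty_or_nonempty with hU | hU
  · simp [hU, ENNReal.zero_rpow_of_pos hd]
  · exact le_iSup (fun _ => ediam (U n) ^ d) hU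

section Graph

variable {X : Type*} [EMetricSpace X] {K : Set X} {f : X → ℝ} {C α : ℝ≥0}

lemma HolderOnWith.exists_cover_graph_inter (hf : HolderOnWith C α f K) (hα0 : 0 < α)
    (hα1 : α ≤ 1) {s : ℝ} (hs : 0 < s) {U : Set X} (hU : ediam U ≤ 1) :
    ∃ (N : ℕ) (V : Fin N → Set (X × ℝ)), (fun x => (x, f x)) '' (U ∩ K) ⊆ ⋃ k, V k ∧
      (∀ k, ediam (V k) ≤ ediam U) ∧
      ∑ k, ediam (V k) ^ (s + (1 - α)) ≤ (C + 1) * ediam U ^ s := by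
  set t := s + (1 - (α : ℝ))
  set δ := (ediam U).toReal
  have hUδ : ediam U = ENNReal.ofReal δ :=
    (ENNReal.ofReal_toReal (ne_top_of_le_ne_top ENNReal.one_ne_top hU)).symm
  have hδ0 : 0 ≤ δ := ENNReal.toReal_nonneg
  have hδ1 : δ ≤ 1 := ENNReal.toReal_le_of_le_ofReal zero_le_one (by simpa using hU)
  set m := (C : ℝ) * δ ^ (s - t)
  have hheight : ediam (f '' (U ∩ K)) ≤ ENNReal.ofReal (m * δ) := by
    have hmδ : m * δ = C * δ ^ (α : ℝ) := by
      rw [mul_assoc, ← Real.rpow_add_one' hδ0 (by simp [t, hα0.ne'])]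
      congr 2; ring
    rw [hmδ, ENNReal.ofReal_mul C.coe_nonneg, ENNReal.ofReal_coe_nnreal,
      ← ENNReal.ofReal_rpow_of_nonneg hδ0 α.coe_nonneg, ← hUδ]
    exact hf.ediam_image_inter_le_of_le le_rfl
  obtain ⟨a, ha⟩ := Real.exists_subset_Icc_of_ediam_le (by positivity) hheight
  have hVdiam (k : ℕ) : ediam (U ×ˢ Icc (a + k * δ) (a + (k + 1) * δ)) ≤ ediam U := by
    refine (ediam_prod_le _ _).trans (max_le le_rfl ?_)
    rw [Real.ediam_Icc, hUδ]
    exact ENNReal.ofReal_le_ofReal (by linarith)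
  refine ⟨⌊m⌋₊ + 1, fun k => U ×ˢ Icc (a + k * δ) (a + (k + 1) * δ), ?_, fun k => hVdiam k, ?_⟩
  · rintro _ ⟨x, hx, rfl⟩
    obtain ⟨k, hk⟩ := mem_iUnion.1 (Icc_subset_iUnion_Icc_mul hδ0 (ha (mem_image_of_mem f hx)))
    exact mem_iUnion.2 ⟨k, hx.1, hk⟩
  · have hst : s ≤ t := by simp only [t]; linarith [NNReal.coe_le_one.2 hα1]
    have ht : 0 < t := hs.trans_le hst
    calc ∑ k : Fin (⌊m⌋₊ + 1), ediam (U ×ˢ Icc (a + k * δ) (a + (k + 1) * δ)) ^ t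
        ≤ ∑ _k : Fin (⌊m⌋₊ + 1), ediam U ^ t := by
          gcongr with k
          exact hVdiam k
      _ = ENNReal.ofReal ((⌊m⌋₊ + 1 : ℕ) * δ ^ t) := by
          rw [Finset.sum_const, Finset.card_univ, Fintype.card_fin, nsmul_eq_mul, hUδ,
            ENNReal.ofReal_mul (by positivity), ENNReal.ofReal_natCast,
            ENNReal.ofReal_rpow_of_nonneg hδ0 ht.le]
      _ ≤ ENNReal.ofReal ((C + 1) * δ ^ s) :=
          ENNReal.ofReal_le_ofReal (natFloor_add_one_mul_rpow_le C.coe_nonneg hδ0 hδ1 hst ht)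
      _ = (C + 1) * ediam U ^ s := by
          rw [hUδ, ENNReal.ofReal_mul (by positivity), ENNReal.ofReal_rpow_of_nonneg hδ0 hs.le]
          norm_cast
          rw [ENNReal.ofReal_coe_nnreal]

theorem HolderOnWith.hausdorffMeasure_graph_eq_zero [MeasurableSpace X] [BorelSpace X]
    (hf : HolderOnWith C α f K) (hα0 : 0 < α) (hα1 : α ≤ 1) {s : ℝ} (hs : 0 < s)
    (hK : μH[s] K = 0) : μH[s + (1 - α)] ((fun x => (x, f x)) '' K) = 0 := by
  set r : ℕ → ℝ≥0∞ := fun n => (n : ℝ≥0∞)⁻¹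
  have hr (n : ℕ) : 0 < min (r n) 1 :=
    lt_min (ENNReal.inv_pos.2 (ENNReal.natCast_ne_top n)) one_pos
  choose U hKU hUdiam hUsum using fun n =>
    exists_cover_tsum_ediam_rpow_lt_of_hausdorffMeasure_lt hs (hK.trans_lt (hr n)) (hr n)
  choose N V hUV hVdiam hVsum using fun n m =>
    hf.exists_cover_graph_inter hα0 hα1 hs ((hUdiam n m).trans (min_le_right _ _))
  have hcover (n : ℕ) : (fun x => (x, f x)) '' K ⊆ ⋃ i : Σ m, Fin (N n m), V n i.1 i.2 := by
    rintro _ ⟨x, hx, rfl⟩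
    obtain ⟨m, hxm⟩ := mem_iUnion.1 (hKU n hx)
    obtain ⟨k, hk⟩ := mem_iUnion.1 (hUV n m ⟨x, ⟨hxm, hx⟩, rfl⟩)
    exact mem_iUnion.2 ⟨⟨m, k⟩, hk⟩
  have hsum (n : ℕ) :
      ∑' i : Σ m, Fin (N n m), ediam (V n i.1 i.2) ^ (s + (1 - α)) ≤ (C + 1) * r n :=
    calc ∑' i : Σ m, Fin (N n m), ediam (V n i.1 i.2) ^ (s + (1 - α))
        = ∑' m, ∑ k, ediam (V n m k) ^ (s + (1 - α)) := by
          simp only [ENNReal.tsum_sigma', tsum_fintype]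
      _ ≤ ∑' m, (C + 1) * ediam (U n m) ^ s := ENNReal.tsum_le_tsum (hVsum n)
      _ = (C + 1) * ∑' m, ediam (U n m) ^ s := ENNReal.tsum_mul_left
      _ ≤ (C + 1) * r n := by gcongr; exact (hUsum n).le.trans (min_le_left _ _)
  refine nonpos_iff_eq_zero.1 ?_
  calc μH[s + (1 - α)] ((fun x => (x, f x)) '' K)
      ≤ liminf (fun n => ∑' i : Σ m, Fin (N n m), ediam (V n i.1 i.2) ^ (s + (1 - α))) atTop :=
        Measure.hausdorffMeasure_le_liminf_tsum _ _ r ENNReal.tendsto_inv_nat_nhds_zero _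
          (.of_forall fun n i => (hVdiam n i.1 i.2).trans ((hUdiam n i.1).trans (min_le_left _ _)))
          (.of_forall hcover)
    _ ≤ liminf (fun n => (C + 1) * r n) atTop := liminf_le_liminf (.of_forall hsum)
    _ = 0 := by
      simpa using (ENNReal.Tendsto.const_mul (a := C + 1) ENNReal.tendsto_inv_nat_nhds_zero
        (.inr (by simp))).liminf_eq

theorem HolderOnWith.dimH_graph_le_add (hf : HolderOnWith C α f K) (hα0 : 0 < α)
    (hα1 : α ≤ 1) :
    dimH ((fun x => (x, f x)) '' K) ≤ dimH K + ENNReal.ofReal (1 - α) := by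
  borelize X
  refine ENNReal.le_of_forall_pos_le_add fun ε hε hfin => ?_
  have hKε : dimH K < dimH K + ε :=
    ENNReal.lt_add_right (ENNReal.add_lt_top.1 hfin).1.ne (by exact_mod_cast hε.ne')
  obtain ⟨s, hKs, hsε⟩ := ENNReal.lt_iff_exists_nnreal_btwn.1 hKε
  have hs : (0 : ℝ) < s := by exact_mod_cast zero_le.trans_lt hKs
  have h1α : (0 : ℝ) ≤ 1 - α := sub_nonneg.2 (NNReal.coe_le_one.2 hα1)
  have hgraph := hf.hausdorffMeasure_graph_eq_zero hα0 hα1 hs (hausdorffMeasure_of_dimH_lt hKs)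
  calc dimH ((fun x => (x, f x)) '' K) ≤ (s + (1 - (α : ℝ)).toNNReal : ℝ≥0) :=
        dimH_le_of_hausdorffMeasure_ne_top (by simp [Real.coe_toNNReal _ h1α, hgraph])
    _ = s + ENNReal.ofReal (1 - α) := by push_cast; rfl
    _ ≤ dimH K + ε + ENNReal.ofReal (1 - α) := by gcongr
    _ = dimH K + ENNReal.ofReal (1 - α) + ε := add_right_comm _ _ _

end Graph

theorem stmt10_general (d : ℕ) (α : ℝ) (hα : α ∈ Set.Ioo (0 : ℝ) 1)
    (K : Set (EuclideanSpace ℝ (Fin d)))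
    (f : EuclideanSpace ℝ (Fin d) → ℝ) (C : ℝ)
    (hf : ∀ x ∈ K, ∀ y ∈ K, |f x - f y| ≤ C * ‖x - y‖ ^ α) :
    dimH ((fun x => (x, f x)) '' K) ≤
      min (dimH K / ENNReal.ofReal α) (dimH K + ENNReal.ofReal (1 - α)) := by
  have hα0 : 0 < α.toNNReal := Real.toNNReal_pos.2 hα.1
  have hα1 : α.toNNReal ≤ 1 := Real.toNNReal_le_one.2 hα.2.le
  have hcoe : (α.toNNReal : ℝ) = α := Real.coe_toNNReal α hα.1.le
  have hholder : HolderOnWith C.toNNReal α.toNNReal f K :=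
    .of_dist_le fun x hx y hy => by
      rw [Real.dist_eq, dist_eq_norm, hcoe]
      exact (hf x hx y hy).trans (by gcongr; exact Real.le_coe_toNNReal C)
  refine le_min (hholder.dimH_graph_le_div hα0 hα1) ?_
  simpa only [hcoe] using hholder.dimH_graph_le_add hα0 hα1

/-- Sharp deterministic bound: the graph of an `α`-Hölder function on a compact set
`K ⊆ ℝ^d` has Hausdorff dimension at most `min(dim_H K / α, dim_H K + 1 - α)`. -/
theorem stmt10 (d : ℕ) (hd : 1 ≤ d) (α : ℝ) (hα : α ∈ Set.Ioo (0 : ℝ) 1)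
    (K : Set (EuclideanSpace ℝ (Fin d))) (hK : IsCompact K)
    (f : EuclideanSpace ℝ (Fin d) → ℝ) (C : ℝ) (hC : 0 ≤ C)
    (hf : ∀ x ∈ K, ∀ y ∈ K, |f x - f y| ≤ C * ‖x - y‖ ^ α) :
    dimH ((fun x => (x, f x)) '' K) ≤
      min (dimH K / ENNReal.ofReal α) (dimH K + ENNReal.ofReal (1 - α)) :=
  stmt10_general d α hα K f C hf
end

section
/- The set {f ∈ C([0,1], ℝ) : dim_H(Γ_f^{[0,1]}) = 1} is comeagre (i.e. contains a countable intersection of dense open sets) in the Banach space C([0,1], ℝ) of continuous real-valued functions on [0,1] equipped with the supremum norm. In other words, for quasi-all continuous functions f on [0,1], the Hausdorff dimension of the graph of f equals 1. -/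
/-!
A graph projects onto `[0,1]`, so its dimension is at least `1`. For the upper bound fix `s > 1`
and a scale `r`. Having a graph covered by finitely many open sets of diameter `≤ r` and total
`s`-cost `∑ (diam V)^s < 1` is an open condition on `f`, since a compact graph inside an open set
stays there under uniformly small perturbations. It is also dense: polynomial graphs are
`C¹` curves, so their `s`-dimensional Hausdorff measure vanishes and any cheap countable cover
can be fattened to an open one and then made finite by compactness. On the countable
intersection over `s = 1 + 1/(k+1)` and `r = 1/n`, the graph has finite `μH[s]` for all these
`s`, hence dimension `≤ 1`.
-/

open Set Filter Topology Metric MeasureTheory MeasureTheory.Measure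
open scoped ENNReal NNReal

section PseudoEMetricSpace

variable {X : Type*} [PseudoEMetricSpace X]

/-- Openness of the covering sets is what makes this condition stable under perturbing `K`. -/
def HasFiniteOpenCover (s : ℝ) (r c : ℝ≥0∞) (K : Set X) : Prop :=
  ∃ 𝒱 : Finset (Set X), (∀ V ∈ 𝒱, IsOpen V ∧ ediam V ≤ r) ∧ K ⊆ ⋃₀ ↑𝒱 ∧
    ∑ V ∈ 𝒱, ediam V ^ s < c

theorem exists_isOpen_superset_ediam_rpow_lt {A : Set X} {s : ℝ} {r η : ℝ≥0∞}
    (hs : 0 < s) (hA : ediam A < r) (hη : η ≠ 0) :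
    ∃ V, IsOpen V ∧ A ⊆ V ∧ ediam V < r ∧ ediam V ^ s < ediam A ^ s + η := by
  have hcont : Continuous fun δ : ℝ≥0 => ediam A + 2 * (δ : ℝ≥0∞) :=
    continuous_const.add <| (ENNReal.continuous_const_mul (by norm_num)).comp ENNReal.continuous_coe
  have hfin : ediam A ^ s ≠ ∞ := ENNReal.rpow_ne_top_of_nonneg hs.le hA.ne_top
  have hnear : ∀ᶠ δ : ℝ≥0 in 𝓝 0,
      ediam A + 2 * (δ : ℝ≥0∞) < r ∧ (ediam A + 2 * (δ : ℝ≥0∞)) ^ s < ediam A ^ s + η := by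
    have h0 : Tendsto (fun δ : ℝ≥0 => ediam A + 2 * (δ : ℝ≥0∞)) (𝓝 0) (𝓝 (ediam A)) := by
      simpa using hcont.tendsto 0
    refine (h0.eventually (gt_mem_nhds hA)).and ?_
    exact ((ENNReal.continuous_rpow_const.tendsto _).comp h0).eventually
      (gt_mem_nhds (ENNReal.lt_add_right hfin hη))
  obtain ⟨δ, ⟨hδr, hδs⟩, hδ⟩ := (hnear.filter_mono nhdsWithin_le_nhds).and
    self_mem_nhdsWithin |>.exists (f := 𝓝[>] (0 : ℝ≥0))
  have hdiam := ediam_thickening_le (s := A) δ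
  exact ⟨thickening δ A, isOpen_thickening, self_subset_thickening (by exact_mod_cast hδ) A,
    hdiam.trans_lt hδr,
    (ENNReal.rpow_le_rpow hdiam hs.le).trans_lt hδs⟩

end PseudoEMetricSpace

section EMetricSpace

variable {X : Type*} [EMetricSpace X] [MeasurableSpace X] [BorelSpace X]

theorem exists_isOpen_cover_tsum_lt_of_hausdorffMeasure_eq_zero {K : Set X} {s : ℝ}
    {r c : ℝ≥0∞} (hs : 0 < s) (hK : μH[s] K = 0) (hr : 0 < r) (hc : c ≠ 0) :
    ∃ V : ℕ → Set X, (∀ n, IsOpen (V n) ∧ ediam (V n) < r) ∧ K ⊆ ⋃ n, V n ∧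
      ∑' n, ediam (V n) ^ s < c := by
  obtain ⟨r', hr'0, hr'r⟩ := exists_between hr
  have hc2 : 0 < c / 2 := ENNReal.half_pos hc
  have hcost : (⨅ (t : ℕ → Set X) (_ : K ⊆ ⋃ n, t n) (_ : ∀ n, ediam (t n) ≤ r'),
      ∑' n, ⨆ _ : (t n).Nonempty, ediam (t n) ^ s) < c / 2 := by
    refine lt_of_le_of_lt ?_ hc2
    rw [← hK, hausdorffMeasure_apply]
    exact le_iSup₂ (f := fun r (_ : 0 < r) => ⨅ (t : ℕ → Set X) (_ : K ⊆ ⋃ n, t n)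
      (_ : ∀ n, ediam (t n) ≤ r), ∑' n, ⨆ _ : (t n).Nonempty, ediam (t n) ^ s) r' hr'0
  simp only [iInf_lt_iff] at hcost
  obtain ⟨t, htK, htr, htc⟩ := hcost
  obtain ⟨η, hη0, hηc⟩ := ENNReal.exists_pos_sum_of_countable hc2.ne' ℕ
  choose V hVo htV hVr hVs using fun n =>
    exists_isOpen_superset_ediam_rpow_lt hs ((htr n).trans_lt hr'r)
      (ENNReal.coe_ne_zero.2 (hη0 n).ne')
  -- the Hausdorff sum skips empty sets, which cost nothing anyway since `0 < s`
  have hsup : ∀ n, ediam (t n) ^ s = ⨆ _ : (t n).Nonempty, ediam (t n) ^ s := by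
    intro n
    rcases (t n).eq_empty_or_nonempty with h | h
    · simp [h, ENNReal.zero_rpow_of_pos hs]
    · simp [h]
  refine ⟨V, fun n => ⟨hVo n, hVr n⟩, htK.trans (iUnion_mono htV), ?_⟩
  calc ∑' n, ediam (V n) ^ s ≤ ∑' n, (ediam (t n) ^ s + η n) :=
        ENNReal.tsum_le_tsum fun n => (hVs n).le
    _ = (∑' n, ediam (t n) ^ s) + ∑' n, (η n : ℝ≥0∞) := ENNReal.tsum_add
    _ < c / 2 + c / 2 := ENNReal.add_lt_add ((tsum_congr hsup).trans_lt htc) hηc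
    _ = c := ENNReal.add_halves c

theorem IsCompact.hasFiniteOpenCover_of_hausdorffMeasure_eq_zero {K : Set X} {s : ℝ}
    {r c : ℝ≥0∞} (hK : IsCompact K) (hs : 0 < s) (hK0 : μH[s] K = 0) (hr : 0 < r)
    (hc : c ≠ 0) : HasFiniteOpenCover s r c K := by
  classical
  obtain ⟨V, hV, hKV, hVc⟩ := exists_isOpen_cover_tsum_lt_of_hausdorffMeasure_eq_zero hs hK0 hr hc
  obtain ⟨I, hI⟩ := hK.elim_finite_subcover V (fun n => (hV n).1) hKV
  refine ⟨I.image V, ?_, ?_, ?_⟩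
  · simp only [Finset.mem_image, forall_exists_index, and_imp]
    rintro _ n - rfl
    exact ⟨(hV n).1, (hV n).2.le⟩
  · simpa [Finset.coe_image, sUnion_image] using hI
  · calc ∑ U ∈ I.image V, ediam U ^ s ≤ ∑ n ∈ I, ediam (V n) ^ s :=
          Finset.sum_image_le_of_nonneg fun _ _ => bot_le
      _ ≤ ∑' n, ediam (V n) ^ s := ENNReal.sum_le_tsum I
      _ < c := hVc

theorem hausdorffMeasure_le_of_forall_hasFiniteOpenCover {K : Set X} {s : ℝ} {c : ℝ≥0∞}
    (hK : ∀ n : ℕ, HasFiniteOpenCover s (n : ℝ≥0∞)⁻¹ c K) : μH[s] K ≤ c := by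
  choose 𝒱 h𝒱 hK𝒱 h𝒱c using hK
  calc μH[s] K ≤ liminf (fun n => ∑ V : 𝒱 n, ediam (V : Set X) ^ s) atTop :=
        hausdorffMeasure_le_liminf_sum s K _ ENNReal.tendsto_inv_nat_nhds_zero
          (fun n (V : 𝒱 n) => (V : Set X)) (Eventually.of_forall fun n V => (h𝒱 n V V.2).2)
          (Eventually.of_forall fun n => by simpa [sUnion_eq_iUnion] using hK𝒱 n)
    _ ≤ c := liminf_le_of_frequently_le' <| Frequently.of_forall fun n => by
        rw [Finset.sum_coe_sort (𝒱 n) fun V => ediam V ^ s]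
        exact (h𝒱c n).le

theorem dimH_le_of_tendsto_of_hausdorffMeasure_ne_top {K : Set X} {u : ℕ → ℝ≥0} {d : ℝ≥0}
    (hu : Tendsto u atTop (𝓝 d)) (hK : ∀ n, μH[u n] K ≠ ∞) : dimH K ≤ d :=
  ge_of_tendsto' (ENNReal.tendsto_coe.2 hu) fun n => dimH_le_of_hausdorffMeasure_ne_top (hK n)

end EMetricSpace

def unitIntervalGraph (f : C(Icc (0 : ℝ) 1, ℝ)) : Set (ℝ × ℝ) :=
  range fun x : Icc (0 : ℝ) 1 => ((x : ℝ), f x)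

theorem isCompact_unitIntervalGraph (f : C(Icc (0 : ℝ) 1, ℝ)) :
    IsCompact (unitIntervalGraph f) :=
  isCompact_range (continuous_subtype_val.prodMk f.continuous)

theorem one_le_dimH_unitIntervalGraph (f : C(Icc (0 : ℝ) 1, ℝ)) :
    1 ≤ dimH (unitIntervalGraph f) := by
  have hproj : Prod.fst '' unitIntervalGraph f = Icc (0 : ℝ) 1 := by
    rw [unitIntervalGraph, ← range_comp]
    exact Subtype.range_coe
  calc (1 : ℝ≥0∞) = dimH (Icc (0 : ℝ) 1) := by
        rw [Real.dimH_of_nonempty_interior (by simp), Module.finrank_self, Nat.cast_one]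
    _ = dimH (Prod.fst '' unitIntervalGraph f) := by rw [hproj]
    _ ≤ dimH (unitIntervalGraph f) := LipschitzWith.prod_fst.dimH_image_le _

theorem dimH_unitIntervalGraph_polynomial_le_one (q : Polynomial ℝ) :
    dimH (unitIntervalGraph (q.toContinuousMapOn (Icc 0 1))) ≤ 1 := by
  have hsmooth : ContDiff ℝ 1 fun x : ℝ => (x, q.eval x) :=
    contDiff_id.prodMk (by simpa using q.contDiff_aeval (𝕜 := ℝ) 1)
  calc dimH (unitIntervalGraph (q.toContinuousMapOn (Icc 0 1)))
      ≤ dimH (range fun x : ℝ => (x, q.eval x)) :=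
        dimH_mono <| range_subset_iff.2 fun x => ⟨x, rfl⟩
    _ ≤ 1 := by simpa using hsmooth.dimH_range_le

theorem isOpen_setOf_unitIntervalGraph_subset {U : Set (ℝ × ℝ)} (hU : IsOpen U) :
    IsOpen {f : C(Icc (0 : ℝ) 1, ℝ) | unitIntervalGraph f ⊆ U} := by
  refine isOpen_iff_forall_mem_open.2 fun f hf => ?_
  obtain ⟨δ, hδ, hδU⟩ := (isCompact_unitIntervalGraph f).exists_thickening_subset_open hU hf
  refine ⟨ball f δ, fun g hg => ?_, isOpen_ball, mem_ball_self hδ⟩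
  rintro _ ⟨x, rfl⟩
  refine hδU (mem_thickening_iff.2 ⟨((x : ℝ), f x), ⟨x, rfl⟩, ?_⟩)
  rw [Prod.dist_eq, dist_self, max_eq_right dist_nonneg]
  exact (ContinuousMap.dist_apply_le_dist x).trans_lt hg

theorem isOpen_setOf_hasFiniteOpenCover_unitIntervalGraph (s : ℝ) (r c : ℝ≥0∞) :
    IsOpen {f : C(Icc (0 : ℝ) 1, ℝ) | HasFiniteOpenCover s r c (unitIntervalGraph f)} := by
  refine isOpen_iff_forall_mem_open.2 fun f ⟨𝒱, h𝒱, hf𝒱, h𝒱c⟩ => ?_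
  exact ⟨_, fun g hg => ⟨𝒱, h𝒱, hg, h𝒱c⟩,
    isOpen_setOf_unitIntervalGraph_subset (isOpen_sUnion fun V hV => (h𝒱 V hV).1), hf𝒱⟩

theorem dense_setOf_hasFiniteOpenCover_unitIntervalGraph {s : ℝ≥0} (hs : 1 < s) {r c : ℝ≥0∞}
    (hr : 0 < r) (hc : c ≠ 0) :
    Dense {f : C(Icc (0 : ℝ) 1, ℝ) | HasFiniteOpenCover s r c (unitIntervalGraph f)} := by
  have hpoly : Dense (polynomialFunctions (Icc (0 : ℝ) 1) : Set C(Icc (0 : ℝ) 1, ℝ)) := by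
    rw [dense_iff_closure_eq, ← Subalgebra.topologicalClosure_coe,
      polynomialFunctions_closure_eq_top, Algebra.coe_top]
  refine hpoly.mono ?_
  rw [polynomialFunctions_coe]
  rintro _ ⟨q, rfl⟩
  have hdim : dimH (unitIntervalGraph (q.toContinuousMapOn (Icc 0 1))) < s :=
    (dimH_unitIntervalGraph_polynomial_le_one q).trans_lt (by exact_mod_cast hs)
  exact (isCompact_unitIntervalGraph _).hasFiniteOpenCover_of_hausdorffMeasure_eq_zero
    (zero_lt_one.trans (by exact_mod_cast hs)) (hausdorffMeasure_of_dimH_lt hdim) hr hc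

/-- Mauldin–Williams: for quasi-all `f ∈ C([0,1])` (in the sense of Baire category for
the supremum-norm topology), the graph of `f` has Hausdorff dimension `1`. -/
theorem stmt11 :
    {f : C(Set.Icc (0 : ℝ) 1, ℝ) |
        dimH (Set.range fun x : Set.Icc (0 : ℝ) 1 => ((x : ℝ), f x)) = 1} ∈
      residual C(Set.Icc (0 : ℝ) 1, ℝ) := by
  set s : ℕ → ℝ≥0 := fun k => 1 + ((k : ℝ≥0) + 1)⁻¹
  have hs : ∀ k, 1 < s k := fun k => lt_add_of_pos_right 1 (by positivity)
  have hs1 : Tendsto s atTop (𝓝 1) := by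
    simpa using tendsto_const_nhds.add (tendsto_one_div_add_atTop_nhds_zero_nat (𝕜 := ℝ≥0))
  have hres : (⋂ (k : ℕ) (n : ℕ), {f : C(Icc (0 : ℝ) 1, ℝ) |
      HasFiniteOpenCover (s k) (n : ℝ≥0∞)⁻¹ 1 (unitIntervalGraph f)}) ∈ residual _ :=
    countable_iInter_mem.2 fun k => countable_iInter_mem.2 fun n =>
      residual_of_dense_open (isOpen_setOf_hasFiniteOpenCover_unitIntervalGraph _ _ _)
        (dense_setOf_hasFiniteOpenCover_unitIntervalGraph (hs k) (by simp) one_ne_zero)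
  refine mem_of_superset hres fun f hf => le_antisymm ?_ (one_le_dimH_unitIntervalGraph f)
  simp only [mem_iInter, mem_ofPred_eq] at hf
  rw [← ENNReal.coe_one]
  exact dimH_le_of_tendsto_of_hausdorffMeasure_ne_top hs1 fun k =>
    ((hausdorffMeasure_le_of_forall_hasFiniteOpenCover (hf k)).trans_lt ENNReal.one_lt_top).ne
end

section
/- Every continuous function f : [0,1] → ℝ can be written as f = f₁ − f₂ where f₁ and f₂ are continuous functions on [0,1] whose graphs both have Hausdorff dimension 1, i.e. dim_H(Γ_{f₁}^{[0,1]}) = 1 and dim_H(Γ_{f₂}^{[0,1]}) = 1. -/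
/-!
Call a set `E` `(s, c)`-small if it has a countable open cover by sets of diameter at most `c`
with `∑ diam ^ s < c`. For `s > 1` and `c > 0`, the continuous `g` with `(s, c)`-small graph form
an open set, because the graph is compact and a Lebesgue number of the cover absorbs uniformly
small perturbations, and a dense one, because it contains the polynomials, whose graphs are
Lipschitz images of `[0, 1]` and so are covered by `N + 1` balls of radius `O(1 / N)`. If the
graph of `g` is `(s, c)`-small for all `c > 0`, its `s`-dimensional Hausdorff measure vanishes.
Taking countably many `s ↓ 1` and `c ↓ 0`, Baire's theorem shows that the graph of a generic `g`
has dimension at most `1`, and it has dimension at least `1` since it projects onto `[0, 1]`.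
As `g ↦ f + g` is a homeomorphism, some `g` is generic together with `f + g`, and
`f = (f + g) - g`.
-/

open Set Filter Metric MeasureTheory Topology
open scoped ENNReal NNReal

noncomputable section

section SmallOpenCover

variable {α : Type*}

def HasSmallOpenCover [PseudoEMetricSpace α] (s : ℝ) (c : ℝ≥0∞) (E : Set α) : Prop :=
  ∃ t : ℕ → Set α, (∀ i, IsOpen (t i)) ∧ E ⊆ ⋃ i, t i ∧ (∀ i, ediam (t i) ≤ c) ∧
    ∑' i, ediam (t i) ^ s < c

theorem hasSmallOpenCover_of_subset_biUnion [PseudoEMetricSpace α] {s : ℝ} (hs : 0 < s)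
    {c δ : ℝ≥0∞} {E : Set α} {N : ℕ} {t : ℕ → Set α} (ht : ∀ i, IsOpen (t i))
    (hE : E ⊆ ⋃ i < N, t i) (hdiam : ∀ i, ediam (t i) ≤ δ) (hδc : δ ≤ c)
    (hsum : N * δ ^ s < c) : HasSmallOpenCover s c E := by
  classical
  set t' : ℕ → Set α := fun i => if i < N then t i else ∅
  have ht' : ∀ i ∉ Finset.range N, ediam (t' i) ^ s = 0 := fun i hi => by
    simp [t', Finset.mem_range.not.1 hi, ENNReal.zero_rpow_of_pos hs]
  refine ⟨t', fun i => ?_, fun x hx => ?_, fun i => ?_, ?_⟩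
  · by_cases hi : i < N <;> simp [t', hi, ht i]
  · obtain ⟨i, hi, hxi⟩ := mem_iUnion₂.1 (hE hx)
    exact mem_iUnion.2 ⟨i, by simpa [t', hi] using hxi⟩
  · by_cases hi : i < N <;> simp [t', hi, (hdiam i).trans hδc]
  · calc ∑' i, ediam (t' i) ^ s = ∑ i ∈ Finset.range N, ediam (t' i) ^ s := tsum_eq_sum ht'
      _ ≤ ∑ _i ∈ Finset.range N, δ ^ s := Finset.sum_le_sum fun i hi => by
          simpa [t', Finset.mem_range.1 hi] using ENNReal.rpow_le_rpow (hdiam i) hs.le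
      _ = N * δ ^ s := by simp
      _ < c := hsum

theorem hausdorffMeasure_eq_zero_of_hasSmallOpenCover [EMetricSpace α] [MeasurableSpace α]
    [BorelSpace α] {s : ℝ} {E : Set α} {c : ℕ → ℝ≥0∞} (hc : Tendsto c atTop (𝓝 0))
    (h : ∀ n, HasSmallOpenCover s (c n) E) : μH[s] E = 0 := by
  choose t _ hcov hdiam hsum using h
  refine nonpos_iff_eq_zero.1 ?_
  calc μH[s] E ≤ liminf (fun n => ∑' i, ediam (t n i) ^ s) atTop :=
        Measure.hausdorffMeasure_le_liminf_tsum s E c hc t (.of_forall hdiam) (.of_forall hcov)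
    _ ≤ liminf c atTop := liminf_le_liminf (.of_forall fun n => (hsum n).le)
    _ = 0 := hc.liminf_eq

theorem dimH_le_of_tendsto_of_hausdorffMeasure_eq_zero [EMetricSpace α] [MeasurableSpace α]
    [BorelSpace α] {E : Set α} {s : ℕ → ℝ≥0} {d : ℝ≥0∞}
    (hs : Tendsto (fun n => (s n : ℝ≥0∞)) atTop (𝓝 d))
    (h : ∀ n, μH[s n] E = 0) : dimH E ≤ d :=
  ge_of_tendsto' hs fun n => dimH_le_of_hausdorffMeasure_ne_top (by simp [h n])

end SmallOpenCover

section LipschitzCurve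

theorem exists_lt_succ_dist_div_le {x : ℝ} (hx : x ∈ Icc (0 : ℝ) 1) {N : ℕ} (hN : N ≠ 0) :
    ∃ i < N + 1, dist x (i / N) ≤ 1 / N := by
  have hN' : (0 : ℝ) < N := by positivity
  refine ⟨⌊x * N⌋₊, Nat.lt_succ_of_le ?_, ?_⟩
  · exact Nat.floor_le_of_le (by nlinarith [hx.2])
  · have hle : (⌊x * N⌋₊ : ℝ) ≤ x * N := Nat.floor_le (by nlinarith [hx.1])
    have hlt : x * N < ⌊x * N⌋₊ + 1 := Nat.lt_floor_add_one _
    rw [Real.dist_eq, show x - ⌊x * N⌋₊ / N = (x * N - ⌊x * N⌋₊) / N by field_simp, abs_div,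
      abs_of_nonneg (by linarith), abs_of_pos hN']
    gcongr
    linarith

variable {α : Type*} [PseudoMetricSpace α]

theorem LipschitzOnWith.image_Icc_subset_iUnion_ball {L : ℝ≥0} {Φ : ℝ → α}
    (hΦ : LipschitzOnWith L Φ (Icc 0 1)) {N : ℕ} (hN : N ≠ 0) :
    Φ '' Icc 0 1 ⊆ ⋃ i < N + 1, ball (Φ (i / N)) ((L + 1) / N) := by
  rintro - ⟨x, hx, rfl⟩
  obtain ⟨i, hi, hxi⟩ := exists_lt_succ_dist_div_le hx hN
  have hiN : (i / N : ℝ) ∈ Icc (0 : ℝ) 1 :=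
    ⟨by positivity, div_le_one_of_le₀ (by exact_mod_cast Nat.lt_succ_iff.1 hi) (by positivity)⟩
  refine mem_iUnion₂.2 ⟨i, hi, mem_ball.2 ?_⟩
  calc dist (Φ x) (Φ (i / N)) ≤ L * dist x (i / N) := hΦ.dist_le_mul x hx _ hiN
    _ ≤ L * (1 / N) := by gcongr
    _ < (L + 1) / N := by
      rw [mul_one_div]; gcongr; linarith

theorem tendsto_natCast_add_one_mul_div_rpow {C s : ℝ} (hC : 0 ≤ C) (hs : 1 < s) :
    Tendsto (fun N : ℕ => (N + 1) * (C / N) ^ s) atTop (𝓝 0) := by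
  have hcont : Tendsto (fun h : ℝ => C ^ s * (h ^ (s - 1) + h ^ s)) (𝓝 0) (𝓝 0) := by
    have hc : Continuous fun h : ℝ => C ^ s * (h ^ (s - 1) + h ^ s) :=
      continuous_const.mul ((Real.continuous_rpow_const (by linarith)).add
        (Real.continuous_rpow_const (by linarith)))
    simpa [Real.zero_rpow (by linarith : s - 1 ≠ 0), Real.zero_rpow (by linarith : s ≠ 0)]
      using hc.tendsto 0
  refine (hcont.comp tendsto_inv_atTop_nhds_zero_nat).congr' ?_
  filter_upwards [eventually_ne_atTop 0] with N hN
  have hN' : (N : ℝ)⁻¹ ≠ 0 := by positivity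
  simp only [Function.comp_apply, div_eq_mul_inv C, Real.mul_rpow hC (inv_nonneg.2 N.cast_nonneg),
    Real.rpow_sub_one hN', div_inv_eq_mul]
  ring

theorem LipschitzOnWith.hasSmallOpenCover_image_Icc {L : ℝ≥0} {Φ : ℝ → α}
    (hΦ : LipschitzOnWith L Φ (Icc 0 1)) {s : ℝ} (hs : 1 < s) {c : ℝ≥0∞} (hc : 0 < c) :
    HasSmallOpenCover s c (Φ '' Icc 0 1) := by
  have hC : (0 : ℝ) ≤ 2 * (L + 1) := by positivity
  have hdiam : Tendsto (fun N : ℕ => ENNReal.ofReal (2 * (L + 1) / N)) atTop (𝓝 0) := by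
    simpa using ENNReal.tendsto_ofReal (tendsto_const_div_atTop_nhds_zero_nat (2 * (L + 1 : ℝ)))
  have hsum : Tendsto (fun N : ℕ => ENNReal.ofReal ((N + 1) * (2 * (L + 1) / N) ^ s))
      atTop (𝓝 0) := by
    simpa using ENNReal.tendsto_ofReal (tendsto_natCast_add_one_mul_div_rpow hC hs)
  obtain ⟨N, hN, hdiamN, hsumN⟩ := ((eventually_ne_atTop 0).and
    ((hdiam.eventually (gt_mem_nhds hc)).and (hsum.eventually (gt_mem_nhds hc)))).exists
  refine hasSmallOpenCover_of_subset_biUnion (zero_lt_one.trans hs) (fun _ => isOpen_ball)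
    (hΦ.image_Icc_subset_iUnion_ball hN) (fun i => ?_) hdiamN.le ?_
  · refine ediam_le_of_forall_dist_le fun y hy z hz => ?_
    rw [mem_ball] at hy hz
    linarith [dist_triangle_right y z (Φ (i / N)), mul_div_assoc 2 ((L : ℝ) + 1) N]
  · convert hsumN using 1
    rw [ENNReal.ofReal_rpow_of_nonneg (by positivity) (by linarith),
      ENNReal.ofReal_mul (by positivity)]
    norm_cast

end LipschitzCurve

namespace ContinuousMap

variable {K : Set ℝ}

def graph (g : C(K, ℝ)) : Set (ℝ × ℝ) := range fun x : K => ((x : ℝ), g x)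

theorem dimH_le_dimH_graph (g : C(K, ℝ)) : dimH K ≤ dimH g.graph := by
  have hproj : Prod.fst '' g.graph = K := by
    rw [graph, ← range_comp]
    exact Subtype.range_coe
  simpa only [hproj] using LipschitzWith.prod_fst.dimH_image_le g.graph

theorem isOpen_setOf_hasSmallOpenCover_graph [CompactSpace K] (s : ℝ) (c : ℝ≥0∞) :
    IsOpen {g : C(K, ℝ) | HasSmallOpenCover s c g.graph} := by
  refine Metric.isOpen_iff.2 fun g ⟨t, hto, hcov, hdiam, hsum⟩ => ?_
  have hcompact : IsCompact g.graph := isCompact_range (by fun_prop)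
  obtain ⟨δ, hδ, hleb⟩ := lebesgue_number_lemma_of_metric hcompact hto hcov
  refine ⟨δ, hδ, fun g' hg' => ⟨t, hto, ?_, hdiam, hsum⟩⟩
  rintro - ⟨x, rfl⟩
  obtain ⟨i, hi⟩ := hleb _ ⟨x, rfl⟩
  refine mem_iUnion.2 ⟨i, hi ?_⟩
  calc dist ((x : ℝ), g' x) ((x : ℝ), g x) = dist (g' x) (g x) := by simp [Prod.dist_eq]
    _ ≤ dist g' g := dist_apply_le_dist x
    _ < δ := hg'

theorem dense_setOf_hasSmallOpenCover_graph {s : ℝ} (hs : 1 < s) {c : ℝ≥0∞} (hc : 0 < c) :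
    Dense {g : C(Icc (0 : ℝ) 1, ℝ) | HasSmallOpenCover s c g.graph} := by
  have hpoly : Dense (polynomialFunctions (Icc (0 : ℝ) 1) : Set C(Icc (0 : ℝ) 1, ℝ)) := by
    rw [dense_iff_closure_eq, ← Subalgebra.topologicalClosure_coe,
      polynomialFunctions_closure_eq_top, Algebra.coe_top]
  refine hpoly.mono ?_
  rintro - ⟨p, -, rfl⟩
  obtain ⟨L, hL⟩ := ((p.contDiff_aeval 1).contDiffOn (s := Icc 0 1)).exists_lipschitzOnWith
    one_ne_zero (convex_Icc 0 1) isCompact_Icc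
  have hgraph : (p.toContinuousMapOn (Icc (0 : ℝ) 1)).graph =
      (fun x => (x, Polynomial.aeval x p)) '' Icc 0 1 := by
    simp [graph, image_eq_range]
  change HasSmallOpenCover s c (p.toContinuousMapOn (Icc (0 : ℝ) 1)).graph
  rw [hgraph]
  exact (LipschitzWith.id.lipschitzOnWith.prodMk hL).hasSmallOpenCover_image_Icc hs hc

theorem eventually_residual_dimH_graph_eq_one :
    ∀ᶠ g in residual C(Icc (0 : ℝ) 1, ℝ), dimH g.graph = 1 := by
  have hinv : Tendsto (fun n : ℕ => ((n : ℝ≥0∞) + 1)⁻¹) atTop (𝓝 0) := by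
    simpa using (tendsto_add_atTop_iff_nat 1).2 ENNReal.tendsto_inv_nat_nhds_zero
  set s : ℕ → ℝ≥0 := fun n => 1 + ((n : ℝ≥0) + 1)⁻¹
  have hs : ∀ n, 1 < (s n : ℝ) := fun n => by simp [s]; positivity
  have hcover : ∀ n m : ℕ, ∀ᶠ g in residual C(Icc (0 : ℝ) 1, ℝ),
      HasSmallOpenCover (s n) ((m : ℝ≥0∞) + 1)⁻¹ g.graph := fun n m =>
    residual_of_dense_open (isOpen_setOf_hasSmallOpenCover_graph _ _)
      (dense_setOf_hasSmallOpenCover_graph (hs n) (by simp))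
  filter_upwards [eventually_countable_forall.2 fun n => eventually_countable_forall.2 (hcover n)]
    with g hg
  refine le_antisymm (dimH_le_of_tendsto_of_hausdorffMeasure_eq_zero ?_
    fun n => hausdorffMeasure_eq_zero_of_hasSmallOpenCover hinv (hg n)) ?_
  · simpa [s] using tendsto_const_nhds.add hinv
  · have hIcc : dimH (Icc (0 : ℝ) 1) = 1 := by
      simpa using Real.dimH_of_mem_nhds (x := (1 / 2 : ℝ))
        (Icc_mem_nhds (by norm_num) (by norm_num))
    exact hIcc ▸ dimH_le_dimH_graph g

end ContinuousMap

/-- Every continuous function on `[0,1]` is the difference of two continuous functions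
whose graphs have Hausdorff dimension `1`. -/
theorem stmt13 (f : C(Set.Icc (0 : ℝ) 1, ℝ)) :
    ∃ f₁ f₂ : C(Set.Icc (0 : ℝ) 1, ℝ), f = f₁ - f₂ ∧
      dimH (Set.range fun x : Set.Icc (0 : ℝ) 1 => ((x : ℝ), f₁ x)) = 1 ∧
      dimH (Set.range fun x : Set.Icc (0 : ℝ) 1 => ((x : ℝ), f₂ x)) = 1 := by
  have hgraph := ContinuousMap.eventually_residual_dimH_graph_eq_one
  have hshift : ∀ᶠ g in residual C(Icc (0 : ℝ) 1, ℝ), dimH (f + g).graph = 1 :=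
    (tendsto_residual_of_isOpenMap (continuous_const_add f)
      (Homeomorph.addLeft f).isOpenMap).eventually hgraph
  obtain ⟨g, hfg, hg⟩ := (dense_of_mem_residual (hshift.and hgraph)).nonempty
  exact ⟨f + g, g, (add_sub_cancel_right f g).symm, hfg, hg⟩
end
end
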